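/- Let buyers be ordered so that $\pi_1 \geq \cdots \geq \pi_n$ with $\pi_k = v_k / t_k$, $t_k = |\mathcal{C}_k| \geq 1$. Define the revenue of the best single-price scheme as $\mathcal{R}_{\text{single}} = \max_{i} \pi_i \sum_{k \leq i} t_k$, and let $\mathcal{R}_{\text{multi}} = \max_i \mathcal{R}(N_i)$ where $\mathcal{R}(N_i)$ is the optimum of the serving LP for $N_i = \{1,\ldots,i\}$ (which is at least $\pi_i \sum_{k \leq i} t_k$ by feasibility of the uniform price). Then $\mathcal{R}_{\text{multi}} \geq \mathcal{R}_{\text{single}}$ and $\mathcal{R}_{\text{multi}} \geq \frac{1}{H_{nm}} \sum_{k=1}^n v_k$ where $m \geq \max_k t_k$. -/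
import Mathlib


noncomputable def harmonicSum (k : ℕ) : ℝ := ∑ j ∈ Finset.range k, (1 : ℝ) / (j + 1)

lemma harmonicSum_nonneg (k : ℕ) : 0 ≤ harmonicSum k :=
  Finset.sum_nonneg fun j _ => by positivity

lemma harmonicSum_mono : Monotone harmonicSum := fun a b hab =>
  Finset.sum_le_sum_of_subset_of_nonneg (Finset.range_subset_range.2 hab)
    (fun j _ _ => by positivity)

lemma harmonicSum_pos {k : ℕ} (hk : 1 ≤ k) : 0 < harmonicSum k := by
  have h1 : (0:ℝ) < harmonicSum 1 := by norm_num [harmonicSum]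
  exact lt_of_lt_of_le h1 (harmonicSum_mono hk)

lemma harmonicSum_diff (a b : ℕ) (hab : a ≤ b) (hb : 0 < b) :
    ((b : ℝ) - a) / b ≤ harmonicSum b - harmonicSum a := by
  have h1 : harmonicSum b - harmonicSum a = ∑ j ∈ Finset.Ico a b, (1:ℝ)/(j+1) := by
    rw [harmonicSum, harmonicSum, Finset.sum_Ico_eq_sub _ hab]
  rw [h1]
  have h2 : ∀ j ∈ Finset.Ico a b, (1:ℝ)/b ≤ (1:ℝ)/(j+1) := by
    intro j hj
    have hjb : j + 1 ≤ b := (Finset.mem_Ico.1 hj).2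
    apply one_div_le_one_div_of_le (by positivity)
    exact_mod_cast hjb
  calc ((b : ℝ) - a) / b = (Finset.Ico a b).card * ((1:ℝ)/b) := by
        rw [Nat.card_Ico, Nat.cast_sub hab]; ring
    _ = ∑ _j ∈ Finset.Ico a b, (1:ℝ)/b := by
        rw [Finset.sum_const, nsmul_eq_mul]
    _ ≤ ∑ j ∈ Finset.Ico a b, (1:ℝ)/(j+1) := Finset.sum_le_sum h2

lemma fin_filter_sum {n : ℕ} (g : Fin n → ℝ) (i : Fin n) :
    ∑ k ∈ Finset.univ.filter (fun k => k ≤ i), g k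
      = ∑ k ∈ Finset.range (i.1 + 1), if h : k < n then g ⟨k, h⟩ else 0 := by
  refine Finset.sum_bij' (fun (a : Fin n) _ => (a : ℕ))
    (fun (b : ℕ) hb => (⟨b, lt_of_lt_of_le (Finset.mem_range.1 hb) i.2⟩ : Fin n))
    ?_ ?_ ?_ ?_ ?_
  · intro a ha
    have : a ≤ i := (Finset.mem_filter.1 ha).2
    exact Finset.mem_range.2 (Nat.lt_succ_of_le this)
  · intro b hb
    refine Finset.mem_filter.2 ⟨Finset.mem_univ _, ?_⟩
    exact Fin.mk_le_mk.2 (Nat.lt_succ_iff.1 (Finset.mem_range.1 hb))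
  · intro a ha; rfl
  · intro b hb; rfl
  · intro a ha
    have h : (a : ℕ) < n := a.2
    simp [h]

/-- The LP-based multi-price scheme dominates the best single-price scheme and achieves at
least a `1 / H_{nm}` fraction of the total value. -/
theorem multi_price_LP_dominates_single_price
    {ι : Type*} [Fintype ι] [DecidableEq ι] (n m : ℕ) (hn : 1 ≤ n) (hm : 1 ≤ m)
    (v : Fin n → ℝ) (hv : ∀ k, 0 ≤ v k)
    (C : Fin n → Finset ι) (hCcard : ∀ k, 1 ≤ (C k).card) (hCm : ∀ k, (C k).card ≤ m)
    (hsort : ∀ k l : Fin n, k ≤ l →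
      v l / ((C l).card : ℝ) ≤ v k / ((C k).card : ℝ))
    (hune : (Finset.univ : Finset (Fin n)).Nonempty)
    (RLP : Fin n → ℝ)
    (hLP : ∀ i : Fin n,
      IsLUB {r : ℝ | ∃ p : ι → ℝ, (∀ b, 0 ≤ p b) ∧
        (∀ k : Fin n, k ≤ i → ∑ b ∈ C k, p b ≤ v k) ∧
        r = ∑ k ∈ Finset.univ.filter (fun k => k ≤ i), ∑ b ∈ C k, p b} (RLP i))
    (Rsingle Rmulti : ℝ)
    (hRsingle : Rsingle = Finset.univ.sup' hune (fun i =>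
      v i / ((C i).card : ℝ) *
        ∑ k ∈ Finset.univ.filter (fun k => k ≤ i), ((C k).card : ℝ)))
    (hRmulti : Rmulti = Finset.univ.sup' hune RLP) :
    Rsingle ≤ Rmulti ∧ (1 / harmonicSum (n * m)) * ∑ k, v k ≤ Rmulti := by
  set π : Fin n → ℝ := fun k => v k / ((C k).card : ℝ) with hπ
  have hcardpos : ∀ k : Fin n, (0:ℝ) < ((C k).card : ℝ) := by
    intro k; exact_mod_cast hCcard k
  have hπnn : ∀ k, 0 ≤ π k := fun k => div_nonneg (hv k) (hcardpos k).le
  have hπcard : ∀ k : Fin n, π k * ((C k).card : ℝ) = v k := by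
    intro k; exact div_mul_cancel₀ _ (hcardpos k).ne'
  -- single price f
  set f : Fin n → ℝ := fun i =>
    π i * ∑ k ∈ Finset.univ.filter (fun k => k ≤ i), ((C k).card : ℝ) with hf
  -- Part 1: f i ≤ RLP i by feasibility of the uniform price π i
  have hfeas : ∀ i : Fin n, f i ≤ RLP i := by
    intro i
    apply (hLP i).1
    refine ⟨fun _ => π i, fun b => hπnn i, ?_, ?_⟩
    · intro k hk
      rw [Finset.sum_const, nsmul_eq_mul]
      calc ((C k).card : ℝ) * π i ≤ ((C k).card : ℝ) * π k :=
            mul_le_mul_of_nonneg_left (hsort k i hk) (hcardpos k).le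
        _ = v k := by rw [mul_comm]; exact hπcard k
    · simp only [Finset.sum_const, nsmul_eq_mul, hf]
      rw [Finset.mul_sum]
      exact Finset.sum_congr rfl fun k _ => mul_comm _ _
  have h1 : Rsingle ≤ Rmulti := by
    rw [hRsingle, hRmulti]
    exact Finset.sup'_le hune _ fun i _ =>
      le_trans (hfeas i) (Finset.le_sup' RLP (Finset.mem_univ i))
  refine ⟨h1, ?_⟩
  -- basic facts about Rsingle
  have hfle : ∀ i : Fin n, f i ≤ Rsingle := by
    intro i; rw [hRsingle]; exact Finset.le_sup' _ (Finset.mem_univ i)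
  have hRsnn : 0 ≤ Rsingle := by
    obtain ⟨i, -⟩ := hune
    refine le_trans ?_ (hfle i)
    exact mul_nonneg (hπnn i) (Finset.sum_nonneg fun k _ => (hcardpos k).le)
  -- natural number partial sums of the t_k
  set tN : ℕ → ℕ := fun k => if h : k < n then (C ⟨k, h⟩).card else 1 with htN
  set SN : ℕ → ℕ := fun j => ∑ k ∈ Finset.range j, tN k with hSN
  have hSNstep : ∀ j, SN (j + 1) = SN j + tN j := by
    intro j; simp [hSN, Finset.sum_range_succ]
  have htN1 : ∀ k, 1 ≤ tN k := by
    intro k; by_cases h : k < n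
    · simpa [htN, h] using hCcard ⟨k, h⟩
    · simp [htN, h]
  have hSNpos : ∀ j, 0 < SN (j + 1) := by
    intro j
    rw [hSNstep]
    exact Nat.lt_of_lt_of_le (htN1 j) (Nat.le_add_left _ _)
  -- the filter sum equals SN
  have hfiltSN : ∀ i : Fin n,
      (∑ k ∈ Finset.univ.filter (fun k => k ≤ i), ((C k).card : ℝ)) = (SN (i.1 + 1) : ℝ) := by
    intro i
    rw [fin_filter_sum (fun k => ((C k).card : ℝ)) i, hSN, Nat.cast_sum]
    apply Finset.sum_congr rfl
    intro k hk
    have hkn : k < n := lt_of_lt_of_le (Finset.mem_range.1 hk) i.2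
    simp [htN, hkn]
  have hkey : ∀ i : Fin n, π i * (SN (i.1 + 1) : ℝ) ≤ Rsingle := by
    intro i
    have h : f i = π i * (SN (i.1 + 1) : ℝ) := by
      show π i * _ = _
      rw [hfiltSN i]
    exact h ▸ hfle i
  -- per-buyer inequality
  have hstep : ∀ k : ℕ, (hk : k < n) →
      v ⟨k, hk⟩ ≤ Rsingle * (harmonicSum (SN (k + 1)) - harmonicSum (SN k)) := by
    intro k hk
    set i : Fin n := ⟨k, hk⟩ with hi
    have hb : (0:ℝ) < (SN (k + 1) : ℝ) := by exact_mod_cast hSNpos k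
    have htcard : tN k = (C i).card := by simp [htN, hk, hi]
    have hab : SN k ≤ SN (k + 1) := by rw [hSNstep]; exact Nat.le_add_right _ _
    have hdiff : ((C i).card : ℝ) / (SN (k + 1) : ℝ)
        ≤ harmonicSum (SN (k + 1)) - harmonicSum (SN k) := by
      have := harmonicSum_diff (SN k) (SN (k + 1)) hab (hSNpos k)
      have hsub : ((SN (k+1) : ℝ) - (SN k : ℝ)) = ((C i).card : ℝ) := by
        rw [hSNstep, htcard]; push_cast; ring
      rwa [hsub] at this
    have hrw : (π i * (SN (k+1) : ℝ)) * (((C i).card : ℝ) / (SN (k + 1) : ℝ)) = v i := by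
      rw [← hπcard i]; field_simp
    calc v i = (π i * (SN (k+1) : ℝ)) * (((C i).card : ℝ) / (SN (k + 1) : ℝ)) := hrw.symm
      _ ≤ Rsingle * (((C i).card : ℝ) / (SN (k + 1) : ℝ)) := by
          apply mul_le_mul_of_nonneg_right (hkey i)
          positivity
      _ ≤ Rsingle * (harmonicSum (SN (k + 1)) - harmonicSum (SN k)) :=
          mul_le_mul_of_nonneg_left hdiff hRsnn
  -- sum up
  have hsum : ∑ k, v k ≤ Rsingle * harmonicSum (SN n) := by
    have h2 : (∑ k, v k) = ∑ k ∈ Finset.range n, (if h : k < n then v ⟨k, h⟩ else 0) := by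
      rw [← Fin.sum_univ_eq_sum_range]
      apply Finset.sum_congr rfl
      intro k _
      simp [k.2]
    rw [h2]
    have h3 : ∑ k ∈ Finset.range n, (if h : k < n then v ⟨k, h⟩ else 0)
        ≤ ∑ k ∈ Finset.range n,
            (Rsingle * (harmonicSum (SN (k + 1)) - harmonicSum (SN k))) := by
      apply Finset.sum_le_sum
      intro k hk
      have hkn : k < n := Finset.mem_range.1 hk
      simpa [hkn] using hstep k hkn
    refine le_trans h3 ?_
    rw [← Finset.mul_sum, Finset.sum_range_sub (fun j => harmonicSum (SN j))]
    have h0 : SN 0 = 0 := by simp [hSN]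
    have hh0 : harmonicSum (SN 0) = 0 := by simp [h0, harmonicSum]
    rw [hh0, sub_zero]
  have hSNnm : SN n ≤ n * m := by
    have : ∀ k ∈ Finset.range n, tN k ≤ m := by
      intro k hk
      have hkn : k < n := Finset.mem_range.1 hk
      simpa [htN, hkn] using hCm ⟨k, hkn⟩
    calc SN n ≤ ∑ _k ∈ Finset.range n, m := Finset.sum_le_sum this
      _ = n * m := by simp [Finset.sum_const, Nat.mul_comm]
  have hHpos : 0 < harmonicSum (n * m) := harmonicSum_pos (Nat.one_le_iff_ne_zero.2
    (by positivity))
  have hfinal : ∑ k, v k ≤ Rmulti * harmonicSum (n * m) := by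
    calc ∑ k, v k ≤ Rsingle * harmonicSum (SN n) := hsum
      _ ≤ Rsingle * harmonicSum (n * m) :=
          mul_le_mul_of_nonneg_left (harmonicSum_mono hSNnm) hRsnn
      _ ≤ Rmulti * harmonicSum (n * m) :=
          mul_le_mul_of_nonneg_right h1 (harmonicSum_nonneg _)
  rw [one_div, inv_mul_le_iff₀ hHpos, mul_comm]
  exact hfinal
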